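/- arXiv:0803.2459 — 5 statements merged into one kernel-verified Lean document; each statement's English description precedes it below -/
import Mathlib

section
/- Let $(\mu_n)$ be a sequence of finite positive measures on $[0,\infty)$ that is increasing for the partial integral order $\preceq$ (i.e. $\mu_n \preceq \mu_{n+1}$ for all $n$) and bounded above by some finite measure $\mu$ (i.e. $\mu_n \preceq \mu$ for all $n$). Then $(\mu_n)$ converges weakly (in fact in total variation) to some finite positive measure $\mu^*$. -/
/-!
Testing `≼` against indicators of the upper sets `Ioi x` and `univ` shows that the tails
`μₙ (Ioi x)` and the masses `μₙ univ` are non-decreasing in `n` and bounded by those of `μ`, so they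
converge. Hence the distribution functions `x ↦ μₙ (Iic x)` converge pointwise to a monotone `F`,
and no mass escapes: at `+∞` the limit tails are squeezed under the tails of `μ`, at `-∞` the
limit tails recover the limit mass. The weak limit is the Stieltjes measure of `F`: the intervals
`Ioc a b` with endpoints at continuity points of `F` form a π-system of small neighbourhoods on
which the measures converge, which suffices for weak convergence once the masses converge too.
-/

open MeasureTheory Filter Topology

/-- The partial integral order `≼` on finite positive measures: `μ ≼ ν` iff
`∫ f dμ ≤ ∫ f dν` for every bounded measurable non-decreasing (nonnegative) `f`. -/
def IntOrder (μ ν : Measure ℝ) : Prop :=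
  ∀ f : ℝ → ℝ, Measurable f → Monotone f → (∀ x, 0 ≤ f x) → (∃ C, ∀ x, f x ≤ C) →
    ∫ x, f x ∂μ ≤ ∫ x, f x ∂ν

open Set

lemma exists_Ioc_mem_nhds_subset_of_dense {α : Type*} [TopologicalSpace α] [LinearOrder α]
    [OrderTopology α] [DenselyOrdered α] [NoMinOrder α] [NoMaxOrder α] {T : Set α}
    (hT : Dense T) {x : α} {u : Set α} (hu : u ∈ 𝓝 x) :
    ∃ a ∈ T, ∃ b ∈ T, a < b ∧ Ioc a b ∈ 𝓝 x ∧ Ioc a b ⊆ u := by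
  obtain ⟨l, r, ⟨hlx, hxr⟩, hlr⟩ := mem_nhds_iff_exists_Ioo_subset.1 hu
  obtain ⟨a, haT, hla, hax⟩ := hT.exists_between hlx
  obtain ⟨b, hbT, hxb, hbr⟩ := hT.exists_between hxr
  exact ⟨a, haT, b, hbT, hax.trans hxb, Ioc_mem_nhds hax hxb,
    fun y hy ↦ hlr ⟨hla.trans hy.1, hy.2.trans_lt hbr⟩⟩

namespace MeasureTheory

lemma IsPiSystem.tendsto_finiteMeasure_of_tendsto_of_mem {Ω ι : Type*} [MeasurableSpace Ω]
    [TopologicalSpace Ω] [SecondCountableTopology Ω] [OpensMeasurableSpace Ω]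
    {S : Set (Set Ω)} (hS : IsPiSystem S) {μ : ι → FiniteMeasure Ω} {ν : FiniteMeasure Ω}
    {l : Filter ι} [l.IsCountablyGenerated] (hmeas : ∀ s ∈ S, MeasurableSet s)
    (h : ∀ u : Set Ω, IsOpen u → ∀ x ∈ u, ∃ s ∈ S, s ∈ 𝓝 x ∧ s ⊆ u)
    (h' : ∀ s ∈ S, Tendsto (fun i ↦ μ i s) l (𝓝 (ν s)))
    (hmass : Tendsto (fun i ↦ (μ i).mass) l (𝓝 ν.mass)) :
    Tendsto μ l (𝓝 ν) := by
  rcases eq_or_ne ν 0 with rfl | hν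
  · exact FiniteMeasure.tendsto_zero_of_tendsto_zero_mass (by simpa using hmass)
  have : Nonempty Ω := by
    by_contra hΩ
    rw [not_nonempty_iff] at hΩ
    exact hν (Subtype.ext (Subsingleton.elim _ _))
  refine (FiniteMeasure.tendsto_normalize_iff_tendsto hν).1 ⟨?_, hmass⟩
  have hmass_ne : ν.mass ≠ 0 := ν.mass_nonzero_iff.2 hν
  have hμ_ne : ∀ᶠ i in l, μ i ≠ 0 :=
    (hmass.eventually_ne hmass_ne).mono fun i hi ↦ (FiniteMeasure.mass_nonzero_iff _).1 hi
  refine hS.tendsto_probabilityMeasure_of_tendsto_of_mem hmeas h fun s hs ↦ ?_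
  rw [ν.normalize_eq_of_nonzero hν]
  refine (((tendsto_inv₀ hmass_ne).comp hmass).mul (h' s hs)).congr' ?_
  filter_upwards [hμ_ne] with i hi
  exact ((μ i).normalize_eq_of_nonzero hi s).symm

end MeasureTheory

lemma Monotone.tendsto_stieltjesFunction_atBot {f : ℝ → ℝ} (hf : Monotone f) {c : ℝ}
    (h : Tendsto f atBot (𝓝 c)) : Tendsto hf.stieltjesFunction atBot (𝓝 c) := by
  refine tendsto_of_tendsto_of_tendsto_of_le_of_le h
    (h.comp (tendsto_atBot_add_const_right _ 1 tendsto_id)) (fun x ↦ ?_) (fun x ↦ ?_)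
  · rw [hf.stieltjesFunction_eq]; exact hf.le_rightLim le_rfl
  · rw [hf.stieltjesFunction_eq]; exact hf.rightLim_le (lt_add_one x)

lemma Monotone.tendsto_stieltjesFunction_atTop {f : ℝ → ℝ} (hf : Monotone f) {c : ℝ}
    (h : Tendsto f atTop (𝓝 c)) : Tendsto hf.stieltjesFunction atTop (𝓝 c) := by
  refine tendsto_of_tendsto_of_tendsto_of_le_of_le h
    (h.comp (tendsto_atTop_add_const_right _ 1 tendsto_id)) (fun x ↦ ?_) (fun x ↦ ?_)
  · rw [hf.stieltjesFunction_eq]; exact hf.le_rightLim le_rfl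
  · rw [hf.stieltjesFunction_eq]; exact hf.rightLim_le (lt_add_one x)

lemma Monotone.stieltjesFunction_eq_of_continuousAt {f : ℝ → ℝ} (hf : Monotone f) {x : ℝ}
    (hx : ContinuousAt f x) : hf.stieltjesFunction x = f x := by
  rw [hf.stieltjesFunction_eq, ← hf.continuousWithinAt_Ioi_iff_rightLim_eq]
  exact hx.continuousWithinAt

theorem exists_tendsto_finiteMeasure_of_tendsto_measureReal_Iic {ι : Type*} {l : Filter ι}
    [l.NeBot] [l.IsCountablyGenerated] {ν : ι → FiniteMeasure ℝ} {F : ℝ → ℝ} {m : ℝ}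
    (hF : ∀ x, Tendsto (fun i ↦ (ν i : Measure ℝ).real (Iic x)) l (𝓝 (F x)))
    (hmass : Tendsto (fun i ↦ (ν i : Measure ℝ).real univ) l (𝓝 m))
    (hF_bot : Tendsto F atBot (𝓝 0)) (hF_top : Tendsto F atTop (𝓝 m)) :
    ∃ ρ : FiniteMeasure ℝ, Tendsto ν l (𝓝 ρ) := by
  have hF_mono : Monotone F := fun x y hxy ↦
    le_of_tendsto_of_tendsto' (hF x) (hF y) fun i ↦ measureReal_mono (Iic_subset_Iic.2 hxy)
  set φ := hF_mono.stieltjesFunction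
  have hφ_bot := hF_mono.tendsto_stieltjesFunction_atBot hF_bot
  have hφ_top := hF_mono.tendsto_stieltjesFunction_atTop hF_top
  let ρ : FiniteMeasure ℝ := ⟨φ.measure, φ.isFiniteMeasure hφ_bot hφ_top⟩
  refine ⟨ρ, ?_⟩
  set D := {x | ¬ContinuousAt F x}
  have hD : D.Countable := hF_mono.countable_not_continuousAt
  refine (isPiSystem_Ioc_mem Dᶜ Dᶜ).tendsto_finiteMeasure_of_tendsto_of_mem ?_ ?_ ?_ ?_
  · rintro _ ⟨a, -, b, -, -, rfl⟩
    exact measurableSet_Ioc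
  · intro u hu x hx
    obtain ⟨a, ha, b, hb, hab, hnhds, hsub⟩ :=
      exists_Ioc_mem_nhds_subset_of_dense (hD.dense_compl ℝ) (hu.mem_nhds hx)
    exact ⟨_, ⟨a, ha, b, hb, hab, rfl⟩, hnhds, hsub⟩
  · rintro _ ⟨a, ha, b, hb, hab, rfl⟩
    rw [← NNReal.tendsto_coe]
    have hρ : (ρ (Ioc a b) : ℝ) = F b - F a := by
      rw [← FiniteMeasure.measureReal_eq_coe_coeFn, measureReal_def, FiniteMeasure.toMeasure_mk,
        φ.measure_Ioc, hF_mono.stieltjesFunction_eq_of_continuousAt (not_not.1 ha),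
        hF_mono.stieltjesFunction_eq_of_continuousAt (not_not.1 hb),
        ENNReal.toReal_ofReal (sub_nonneg.2 (hF_mono hab.le))]
    have hν : ∀ i, (ν i (Ioc a b) : ℝ) =
        (ν i : Measure ℝ).real (Iic b) - (ν i : Measure ℝ).real (Iic a) := fun i ↦ by
      rw [← FiniteMeasure.measureReal_eq_coe_coeFn, ← Iic_sdiff_Iic,
        measureReal_sdiff (Iic_subset_Iic.2 hab.le) measurableSet_Iic]
    simpa only [hρ, hν] using (hF b).sub (hF a)
  · rw [← NNReal.tendsto_coe]
    have hρ : (ρ.mass : ℝ) = m := by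
      rw [FiniteMeasure.mass, ← FiniteMeasure.measureReal_eq_coe_coeFn, measureReal_def,
        FiniteMeasure.toMeasure_mk, φ.measure_univ hφ_bot hφ_top, sub_zero,
        ENNReal.toReal_ofReal (ge_of_tendsto' hmass fun i ↦ measureReal_nonneg)]
    simpa [hρ] using hmass

lemma tendsto_measureReal_Ioi_atBot (μ : Measure ℝ) [IsFiniteMeasure μ] :
    Tendsto (fun x ↦ μ.real (Ioi x)) atBot (𝓝 (μ.real univ)) := by
  have h := tendsto_measure_iUnion_atBot (μ := μ) (antitone_Ioi (α := ℝ))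
  rw [iUnion_Ioi] at h
  exact (ENNReal.tendsto_toReal (measure_ne_top μ univ)).comp h

lemma tendsto_measureReal_Ioi_atTop (μ : Measure ℝ) [IsFiniteMeasure μ] :
    Tendsto (fun x ↦ μ.real (Ioi x)) atTop (𝓝 0) := by
  have h : Tendsto (fun x ↦ μ.real (Iic x)) atTop (𝓝 (μ.real univ)) :=
    (ENNReal.tendsto_toReal (measure_ne_top μ univ)).comp (tendsto_measure_Iic_atTop μ)
  simpa only [← compl_Iic, measureReal_compl measurableSet_Iic, sub_self] using
    (tendsto_const_nhds (x := μ.real univ)).sub h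

lemma IntOrder.measureReal_le {μ ν : Measure ℝ} (h : IntOrder μ ν) {s : Set ℝ}
    (hs : MeasurableSet s) (hup : IsUpperSet s) : μ.real s ≤ ν.real s := by
  have hmono : Monotone (s.indicator (1 : ℝ → ℝ)) := fun x y hxy ↦ by
    by_cases hx : x ∈ s
    · simp [hx, hup hxy hx]
    · simp [hx, indicator_nonneg]
  simpa only [integral_indicator_one hs] using
    h _ (measurable_one.indicator hs) hmono (indicator_nonneg fun _ _ ↦ zero_le_one)
      ⟨1, fun x ↦ by by_cases hx : x ∈ s <;> simp [hx]⟩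

section IntOrderChain

variable {μs : ℕ → Measure ℝ} {μ : Measure ℝ} (hbdd : ∀ n, IntOrder (μs n) μ)
include hbdd

lemma bddAbove_range_measureReal_of_intOrder {s : Set ℝ} (hs : MeasurableSet s)
    (hup : IsUpperSet s) : BddAbove (range fun n ↦ (μs n).real s) :=
  ⟨μ.real s, by rintro _ ⟨n, rfl⟩; exact (hbdd n).measureReal_le hs hup⟩

lemma tendsto_measureReal_of_intOrder (hmono : ∀ n, IntOrder (μs n) (μs (n + 1))) {s : Set ℝ}
    (hs : MeasurableSet s) (hup : IsUpperSet s) :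
    Tendsto (fun n ↦ (μs n).real s) atTop (𝓝 (⨆ n, (μs n).real s)) :=
  tendsto_atTop_ciSup (monotone_nat_of_le_succ fun n ↦ (hmono n).measureReal_le hs hup)
    (bddAbove_range_measureReal_of_intOrder hbdd hs hup)

lemma tendsto_iSup_measureReal_Ioi_atBot_of_intOrder [∀ n, IsFiniteMeasure (μs n)] :
    Tendsto (fun x ↦ ⨆ n, (μs n).real (Ioi x)) atBot (𝓝 (⨆ n, (μs n).real univ)) := by
  have hbdd_Ioi (x : ℝ) :=
    bddAbove_range_measureReal_of_intOrder hbdd measurableSet_Ioi (isUpperSet_Ioi x)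
  refine tendsto_order.2 ⟨fun r hr ↦ ?_, fun r hr ↦ .of_forall fun x ↦ ?_⟩
  · obtain ⟨n, hn⟩ := exists_lt_of_lt_ciSup hr
    filter_upwards [(tendsto_order.1 (tendsto_measureReal_Ioi_atBot (μs n))).1 r hn] with x hx
    exact hx.trans_le (le_ciSup (hbdd_Ioi x) n)
  · refine lt_of_le_of_lt (ciSup_mono ?_ fun n ↦ measureReal_mono (subset_univ _)) hr
    exact bddAbove_range_measureReal_of_intOrder hbdd MeasurableSet.univ isUpperSet_univ

lemma tendsto_iSup_measureReal_Ioi_atTop_of_intOrder [IsFiniteMeasure μ] :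
    Tendsto (fun x ↦ ⨆ n, (μs n).real (Ioi x)) atTop (𝓝 0) :=
  tendsto_of_tendsto_of_tendsto_of_le_of_le tendsto_const_nhds (tendsto_measureReal_Ioi_atTop μ)
    (fun _ ↦ Real.iSup_nonneg fun _ ↦ measureReal_nonneg)
    (fun x ↦ ciSup_le fun n ↦ (hbdd n).measureReal_le measurableSet_Ioi (isUpperSet_Ioi x))

end IntOrderChain

theorem stmt0_general (μs : ℕ → Measure ℝ) (μ : Measure ℝ)
    [∀ n, IsFiniteMeasure (μs n)] [IsFiniteMeasure μ]
    (hmono : ∀ n, IntOrder (μs n) (μs (n + 1)))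
    (hbdd : ∀ n, IntOrder (μs n) μ) :
    ∃ μstar : Measure ℝ, IsFiniteMeasure μstar ∧
      ∀ f : ℝ → ℝ, Continuous f → (∃ C, ∀ x, |f x| ≤ C) →
        Tendsto (fun n => ∫ x, f x ∂(μs n)) atTop (𝓝 (∫ x, f x ∂μstar)) := by
  set G : ℝ → ℝ := fun x ↦ ⨆ n, (μs n).real (Ioi x)
  set m := ⨆ n, (μs n).real univ
  have hmass := tendsto_measureReal_of_intOrder hbdd hmono MeasurableSet.univ isUpperSet_univ
  have hG (x : ℝ) :=
    tendsto_measureReal_of_intOrder hbdd hmono measurableSet_Ioi (isUpperSet_Ioi x)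
  have hcdf (x : ℝ) : Tendsto (fun n ↦ (μs n).real (Iic x)) atTop (𝓝 (m - G x)) := by
    simpa only [← compl_Ioi, measureReal_compl measurableSet_Ioi] using hmass.sub (hG x)
  have hG_bot : Tendsto G atBot (𝓝 m) := tendsto_iSup_measureReal_Ioi_atBot_of_intOrder hbdd
  have hG_top : Tendsto G atTop (𝓝 0) := tendsto_iSup_measureReal_Ioi_atTop_of_intOrder hbdd
  have hcdf_bot : Tendsto (fun x ↦ m - G x) atBot (𝓝 0) := by
    simpa only [sub_self] using (tendsto_const_nhds (x := m)).sub hG_bot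
  have hcdf_top : Tendsto (fun x ↦ m - G x) atTop (𝓝 m) := by
    simpa only [sub_zero] using tendsto_const_nhds.sub hG_top
  obtain ⟨ρ, hρ⟩ := exists_tendsto_finiteMeasure_of_tendsto_measureReal_Iic
    (ν := fun n ↦ ⟨μs n, inferInstance⟩) hcdf hmass hcdf_bot hcdf_top
  refine ⟨ρ, inferInstance, fun f hf ⟨C, hC⟩ ↦ ?_⟩
  exact FiniteMeasure.tendsto_iff_forall_integral_tendsto.1 hρ
    (.ofNormedAddCommGroup f hf C fun x ↦ (Real.norm_eq_abs _).trans_le (hC x))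

/-- A `≼`-increasing sequence of finite measures on `[0,∞)` bounded above by a finite
measure converges weakly to some finite measure. -/
theorem stmt0 (μs : ℕ → Measure ℝ) (μ : Measure ℝ)
    [∀ n, IsFiniteMeasure (μs n)] [IsFiniteMeasure μ]
    (hsupp : ∀ n, μs n (Set.Iio 0) = 0) (hsuppμ : μ (Set.Iio 0) = 0)
    (hmono : ∀ n, IntOrder (μs n) (μs (n + 1)))
    (hbdd : ∀ n, IntOrder (μs n) μ) :
    ∃ μstar : Measure ℝ, IsFiniteMeasure μstar ∧
      ∀ f : ℝ → ℝ, Continuous f → (∃ C, ∀ x, |f x| ≤ C) →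
        Tendsto (fun n => ∫ x, f x ∂(μs n)) atTop (𝓝 (∫ x, f x ∂μstar)) :=
  stmt0_general μs μ hmono hbdd
end

section
/- Let $(\Omega, \mathcal{F}, \mathbb{P})$ be a probability space with an ergodic measure-preserving invertible transformation $\theta$, and let $\sigma \ge 0$, $\xi > 0$ be integrable random variables with $\sigma_n = \sigma\circ\theta^n$, $\xi_n = \xi\circ\theta^n$. Then the random variable $L = \left[\sup_{j \ge 1}\left(\sigma_{-j} - \sum_{i=1}^{j}\xi_{-i}\right)\right]^+$ satisfies the equation $L\circ\theta = \left[\max\{L, \sigma\} - \xi\right]^+$ almost surely. -/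
/-!
Pathwise, the terms of the supremum defining `L ∘ θ` are `σ - ξ` followed by the terms defining
`L` shifted down by `ξ`, so the recursion holds wherever that supremum is finite; the inner
truncation at `0` disappears because `ξ ≥ 0`. Finiteness holds almost surely because
`σ_{-j} ≤ ε j + C` for every `ε > 0` (Borel–Cantelli, from integrability), while the Birkhoff sums
of `ξ` along `θ⁻¹` satisfy `S_n ≥ c n - C` for some `c > 0`. The latter is a weak form of
Birkhoff's theorem: the set where it holds is invariant, hence null or conull by ergodicity, and if
it were null, the maximal ergodic lemma applied to `c - ξ` would give `∫ ξ ≤ c` for any `c > 0`.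
-/

open MeasureTheory Filter Topology

/-- The Loynes variable `L = [sup_{j ≥ 1} (σ_{-j} - ∑_{i=1}^{j} ξ_{-i})]⁺`,
where `σ_{-j} = σ ∘ θ⁻ʲ` and `ξ_{-i} = ξ ∘ θ⁻ⁱ`. -/
noncomputable def Lfun {Ω : Type*} (θinv : Ω → Ω) (σ ξ : Ω → ℝ) (ω : Ω) : ℝ :=
  max (⨆ j : ℕ, (σ (θinv^[j + 1] ω) - ∑ i ∈ Finset.range (j + 1), ξ (θinv^[i + 1] ω))) 0

theorem sup_ciSup_nat_succ {α : Type*} [ConditionallyCompleteLattice α] {u : ℕ → α}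
    (hu : BddAbove (Set.range fun i => u (i + 1))) : u 0 ⊔ ⨆ i, u (i + 1) = ⨆ i, u i := by
  have hbdd : BddAbove (Set.range u) := by
    obtain ⟨M, hM⟩ := hu
    refine ⟨u 0 ⊔ M, ?_⟩
    rintro _ ⟨_ | i, rfl⟩
    exacts [le_sup_left, le_sup_of_le_right (hM ⟨i, rfl⟩)]
  refine le_antisymm (sup_le (le_ciSup hbdd 0) (ciSup_le fun i => le_ciSup hbdd (i + 1)))
    (ciSup_le ?_)
  rintro (_ | i)
  exacts [le_sup_left, le_sup_of_le_right (le_ciSup hu i)]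

theorem Filter.Eventually.exists_forall_le_add {u v : ℕ → ℝ} (h : ∀ᶠ n in atTop, u n ≤ v n) :
    ∃ C, ∀ n, u n ≤ v n + C := by
  obtain ⟨N, hN⟩ := eventually_atTop.1 h
  obtain ⟨C, hC⟩ := ((Set.finite_Iio N).image fun n => u n - v n).bddAbove
  refine ⟨max C 0, fun n => ?_⟩
  rcases le_or_gt N n with hn | hn
  · linarith [hN n hn, le_max_right C 0]
  · linarith [hC ⟨n, hn, rfl⟩, le_max_left C 0]

theorem Ergodic.of_leftInverse {α : Type*} [MeasurableSpace α] {μ : Measure α} {f g : α → α}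
    (hf : Ergodic f μ) (hg : Measurable g) (h : Function.LeftInverse g f) : Ergodic g μ where
  measurable := hg
  map_eq := by
    conv_lhs => rw [← hf.map_eq]
    rw [Measure.map_map hg hf.measurable, h.comp_eq_id, Measure.map_id]
  aeconst_set s hs hgs := hf.aeconst_set hs <| by
    conv_lhs => rw [← hgs]
    rw [← Set.preimage_comp, h.comp_eq_id, Set.preimage_id]

section MaximalErgodic

variable {α : Type*} {T : α → α} {f : α → ℝ}

/-- `maxBirkhoffSum T f N x = max {birkhoffSum T f n x | n ≤ N}`. -/
def maxBirkhoffSum (T : α → α) (f : α → ℝ) : ℕ → α → ℝ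
  | 0 => 0
  | N + 1 => fun x => max (f x + maxBirkhoffSum T f N (T x)) 0

theorem maxBirkhoffSum_nonneg (N : ℕ) (x : α) : 0 ≤ maxBirkhoffSum T f N x := by
  cases N
  exacts [le_rfl, le_max_right _ _]

theorem birkhoffSum_le_maxBirkhoffSum {n N : ℕ} (h : n ≤ N) (x : α) :
    birkhoffSum T f n x ≤ maxBirkhoffSum T f N x := by
  induction N generalizing n x with
  | zero => simp [Nat.le_zero.1 h, maxBirkhoffSum]
  | succ N ih =>
    cases n with
    | zero => exact maxBirkhoffSum_nonneg _ x
    | succ n =>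
      rw [birkhoffSum_succ']
      exact le_max_of_le_left (by gcongr; exact ih (by omega) _)

theorem maxBirkhoffSum_le_succ (N : ℕ) (x : α) :
    maxBirkhoffSum T f N x ≤ maxBirkhoffSum T f (N + 1) x := by
  induction N generalizing x with
  | zero => exact maxBirkhoffSum_nonneg _ x
  | succ N ih => exact max_le_max (by gcongr; exact ih _) le_rfl

variable [MeasurableSpace α] {μ : Measure α}

theorem integrable_maxBirkhoffSum (hT : MeasurePreserving T μ μ) (hf : Integrable f μ) (N : ℕ) :
    Integrable (maxBirkhoffSum T f N) μ := by
  induction N with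
  | zero => exact integrable_zero _ _ _
  | succ N ih => exact (hf.add (hT.integrable_comp_of_integrable ih)).sup (integrable_zero _ _ _)

/-- The maximal ergodic lemma. -/
theorem integral_nonneg_of_ae_exists_birkhoffSum_pos (hT : MeasurePreserving T μ μ)
    (hf : Integrable f μ) (h : ∀ᵐ x ∂μ, ∃ n, 0 < birkhoffSum T f n x) :
    0 ≤ ∫ x, f x ∂μ := by
  set M := maxBirkhoffSum T f
  -- `M (N + 1) - M N ∘ T = max f (- M N ∘ T)` has nonnegative integral and tends to `f`.
  set F : ℕ → α → ℝ := fun N x => M (N + 1) x - M N (T x)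
  have hMT : ∀ N, Integrable (fun x => M N (T x)) μ := fun N =>
    hT.integrable_comp_of_integrable (integrable_maxBirkhoffSum hT hf N)
  have hF_int : ∀ N, 0 ≤ ∫ x, F N x ∂μ := fun N => by
    have hcomp : ∫ x, M N (T x) ∂μ = ∫ x, M N x ∂μ := by
      rw [← integral_map hT.aemeasurable (by
        rw [hT.map_eq]; exact (integrable_maxBirkhoffSum hT hf N).aestronglyMeasurable), hT.map_eq]
    rw [integral_sub (integrable_maxBirkhoffSum hT hf _) (hMT N), hcomp, sub_nonneg]
    exact integral_mono (integrable_maxBirkhoffSum hT hf _) (integrable_maxBirkhoffSum hT hf _)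
      (maxBirkhoffSum_le_succ N)
  have hF_bound : ∀ N x, ‖F N x‖ ≤ ‖f x‖ := fun N x => by
    have h0 := maxBirkhoffSum_nonneg (T := T) (f := f) N (T x)
    simp only [F, M, maxBirkhoffSum, Real.norm_eq_abs]
    rw [abs_le]
    constructor <;> cases max_cases (f x + maxBirkhoffSum T f N (T x)) 0 <;>
      linarith [neg_abs_le (f x), le_abs_self (f x)]
  have hF_lim : ∀ᵐ x ∂μ, Tendsto (fun N => F N x) atTop (𝓝 (f x)) := by
    filter_upwards [h] with x ⟨n, hn⟩
    rcases n with _ | m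
    · simp at hn
    refine tendsto_const_nhds.congr' (eventually_atTop.2 ⟨m, fun N hN => ?_⟩)
    have : birkhoffSum T f m (T x) ≤ M N (T x) := birkhoffSum_le_maxBirkhoffSum hN _
    rw [birkhoffSum_succ'] at hn
    simp only [F, M, maxBirkhoffSum]
    rw [max_eq_left (by linarith)]
    ring
  have hF_meas : ∀ N, AEStronglyMeasurable (F N) μ := fun N =>
    ((integrable_maxBirkhoffSum hT hf _).sub (hMT N)).aestronglyMeasurable
  exact ge_of_tendsto (tendsto_integral_of_dominated_convergence _ hF_meas hf.norm
    (fun N => ae_of_all _ (hF_bound N)) hF_lim) (Eventually.of_forall hF_int)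

end MaximalErgodic

section LinearGrowth

variable {α : Type*} {T : α → α} {g : α → ℝ}

def linearGrowthSet (T : α → α) (g : α → ℝ) : Set α :=
  {x | ∃ c > 0, ∃ C, ∀ n : ℕ, c * n - C ≤ birkhoffSum T g n x}

theorem preimage_linearGrowthSet : T ⁻¹' linearGrowthSet T g = linearGrowthSet T g := by
  ext x
  simp only [linearGrowthSet, Set.mem_preimage, Set.mem_ofPred_eq]
  constructor
  · rintro ⟨c, hc, C, hC⟩
    refine ⟨c, hc, |C| + |g x| + c, fun n => ?_⟩
    cases n with
    | zero => simp only [birkhoffSum_zero]; push_cast; linarith [abs_nonneg C, abs_nonneg (g x)]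
    | succ m =>
      rw [birkhoffSum_succ']
      push_cast
      linarith [hC m, le_abs_self C, neg_abs_le (g x)]
  · rintro ⟨c, hc, C, hC⟩
    refine ⟨c, hc, C + |g x|, fun n => ?_⟩
    have h := hC (n + 1)
    rw [birkhoffSum_succ'] at h
    push_cast at h
    linarith [le_abs_self (g x)]

theorem linearGrowthSet_eq_iUnion :
    linearGrowthSet T g =
      ⋃ k : ℕ, ⋃ C : ℕ, ⋂ n : ℕ, {x | 1 / (k + 1 : ℝ) * n - C ≤ birkhoffSum T g n x} := by
  ext x
  simp only [linearGrowthSet, Set.mem_ofPred_eq, Set.mem_iUnion, Set.mem_iInter]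
  constructor
  · rintro ⟨c, hc, C, hC⟩
    obtain ⟨k, hk⟩ := exists_nat_one_div_lt hc
    obtain ⟨C', hC'⟩ := exists_nat_ge C
    refine ⟨k, C', fun n => le_trans ?_ (hC n)⟩
    have : 1 / (k + 1 : ℝ) * n ≤ c * n := by gcongr
    linarith
  · rintro ⟨k, C, hC⟩
    exact ⟨_, by positivity, C, hC⟩

variable [MeasurableSpace α] {μ : Measure α}

theorem integrable_birkhoffSum (hT : MeasurePreserving T μ μ) (hg : Integrable g μ) (n : ℕ) :
    Integrable (birkhoffSum T g n) μ := by
  have : birkhoffSum T g n = ∑ i ∈ Finset.range n, g ∘ T^[i] := by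
    funext x; simp [birkhoffSum, Finset.sum_apply]
  rw [this]
  exact integrable_finsetSum' _ fun i _ => (hT.iterate i).integrable_comp_of_integrable hg

theorem nullMeasurableSet_linearGrowthSet (hT : MeasurePreserving T μ μ) (hg : Integrable g μ) :
    NullMeasurableSet (linearGrowthSet T g) μ := by
  rw [linearGrowthSet_eq_iUnion]
  exact .iUnion fun k => .iUnion fun C => .iInter fun n =>
    nullMeasurableSet_le aemeasurable_const (integrable_birkhoffSum hT hg n).aemeasurable

theorem Ergodic.ae_mem_linearGrowthSet [IsProbabilityMeasure μ] (hT : Ergodic T μ)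
    (hg : Integrable g μ) (hpos : 0 < ∫ x, g x ∂μ) :
    ∀ᵐ x ∂μ, x ∈ linearGrowthSet T g := by
  refine (hT.quasiErgodic.ae_mem_or_ae_notMem₀
    (nullMeasurableSet_linearGrowthSet hT.toMeasurePreserving hg)
    (.of_eq preimage_linearGrowthSet)).resolve_right fun hnot => ?_
  obtain ⟨k, hk⟩ := exists_nat_one_div_lt hpos
  set c : ℝ := 1 / (k + 1)
  -- Off the growth set the sums of `c - g` become positive, so the maximal lemma gives `∫ g ≤ c`.
  have hsum : ∀ n x, birkhoffSum T (fun y => c - g y) n x = c * n - birkhoffSum T g n x := by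
    intro n x
    simp [birkhoffSum, Finset.sum_sub_distrib, mul_comm]
  have hmax := integral_nonneg_of_ae_exists_birkhoffSum_pos (f := fun y => c - g y)
    hT.toMeasurePreserving ((integrable_const c).sub hg) ?_
  · rw [integral_sub (integrable_const c) hg, integral_const] at hmax
    simp only [probReal_univ, smul_eq_mul, one_mul, sub_nonneg] at hmax
    linarith
  filter_upwards [hnot] with x hx
  by_contra! hle
  refine hx ⟨c, by positivity, 0, fun n => ?_⟩
  linarith [hle n, hsum n x]

end LinearGrowth

section Sublinear

variable {α : Type*} [MeasurableSpace α] {μ : Measure α} [IsProbabilityMeasure μ] {T : α → α}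
  {f : α → ℝ}

theorem MeasureTheory.MeasurePreserving.ae_eventually_le_mul (hT : MeasurePreserving T μ μ)
    (hf : Integrable f μ) {ε : ℝ} (hε : 0 < ε) :
    ∀ᵐ x ∂μ, ∀ᶠ n : ℕ in atTop, f (T^[n] x) ≤ ε * n := by
  set X : α → ℝ := fun x => |f x| / ε
  have hX : Integrable X μ := hf.abs.div_const ε
  let _ : MeasureSpace α := ⟨μ⟩
  -- Borel–Cantelli, since `∑ μ {X > n} ≤ ∫ X + 1`
  have hsum := ProbabilityTheory.tsum_prob_mem_Ioi_lt_top hX fun x => by positivity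
  have hpre : ∀ n : ℕ, μ (T^[n] ⁻¹' {x | X x ∈ Set.Ioi (n : ℝ)}) = μ {x | X x ∈ Set.Ioi (n : ℝ)} :=
    fun n => (hT.iterate n).measure_preimage
      (hX.aemeasurable.nullMeasurableSet_preimage measurableSet_Ioi)
  filter_upwards [ae_eventually_notMem ((tsum_congr hpre).trans_lt hsum).ne] with x hx
  filter_upwards [hx] with n hn
  simp only [Set.mem_preimage, Set.mem_ofPred_eq, Set.mem_Ioi, not_lt, X,
    div_le_iff₀ hε] at hn
  linarith [le_abs_self (f (T^[n] x))]

theorem MeasureTheory.MeasurePreserving.ae_forall_exists_le_mul_add (hT : MeasurePreserving T μ μ)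
    (hf : Integrable f μ) :
    ∀ᵐ x ∂μ, ∀ ε > 0, ∃ C, ∀ n : ℕ, f (T^[n] x) ≤ ε * n + C := by
  filter_upwards [ae_all_iff.2 fun k : ℕ =>
    hT.ae_eventually_le_mul hf (Nat.one_div_pos_of_nat (n := k))] with x hx ε hε
  obtain ⟨k, hk⟩ := exists_nat_one_div_lt hε
  obtain ⟨C, hC⟩ := (hx k).exists_forall_le_add
  refine ⟨C, fun n => (hC n).trans ?_⟩
  gcongr

end Sublinear

section Loynes

variable {Ω : Type*} {T : Ω → Ω} {σ ξ : Ω → ℝ}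

def loynesSeq (T : Ω → Ω) (σ ξ : Ω → ℝ) (x : Ω) (j : ℕ) : ℝ :=
  σ (T^[j] x) - birkhoffSum T ξ (j + 1) x

theorem Lfun_eq_loynesSeq (x : Ω) : Lfun T σ ξ x = max (⨆ j, loynesSeq T σ ξ (T x) j) 0 := rfl

theorem ciSup_loynesSeq {x : Ω} (hx : BddAbove (Set.range (loynesSeq T σ ξ x))) :
    ⨆ j, loynesSeq T σ ξ x j = max (σ x) (⨆ j, loynesSeq T σ ξ (T x) j) - ξ x := by
  have hsucc : ∀ j, loynesSeq T σ ξ x (j + 1) = loynesSeq T σ ξ (T x) j - ξ x := fun j => by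
    simp only [loynesSeq, birkhoffSum_succ' T ξ (j + 1), Function.iterate_succ_apply]
    ring
  have hbdd : BddAbove (Set.range (loynesSeq T σ ξ (T x))) := by
    obtain ⟨M, hM⟩ := hx
    exact ⟨M + ξ x, by rintro _ ⟨j, rfl⟩; linarith [hM ⟨j + 1, rfl⟩, hsucc j]⟩
  have h0 : loynesSeq T σ ξ x 0 = σ x - ξ x := by simp [loynesSeq]
  rw [← sup_ciSup_nat_succ (hx.mono (Set.range_comp_subset_range (· + 1) _)), funext hsucc,
    ← ciSup_sub hbdd, h0, max_sub_sub_right]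

theorem Lfun_apply_eq_of_bddAbove {θ : Ω → Ω} {x : Ω} (hx : T (θ x) = x) (hξ : 0 ≤ ξ x)
    (hbdd : BddAbove (Set.range (loynesSeq T σ ξ x))) :
    Lfun T σ ξ (θ x) = max (max (Lfun T σ ξ x) (σ x) - ξ x) 0 := by
  rw [Lfun_eq_loynesSeq, hx, ciSup_loynesSeq hbdd, Lfun_eq_loynesSeq]
  simp only [max_def]
  split_ifs <;> linarith

theorem Ergodic.ae_bddAbove_range_loynesSeq [MeasurableSpace Ω] {μ : Measure Ω}
    [IsProbabilityMeasure μ] (hT : Ergodic T μ) (hσ : Integrable σ μ) (hξ : Integrable ξ μ)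
    (hξpos : 0 < ∫ x, ξ x ∂μ) :
    ∀ᵐ x ∂μ, BddAbove (Set.range (loynesSeq T σ ξ x)) := by
  filter_upwards [hT.ae_mem_linearGrowthSet hξ hξpos,
    hT.toMeasurePreserving.ae_forall_exists_le_mul_add hσ] with x ⟨c, hc, C, hC⟩ hσx
  obtain ⟨C', hC'⟩ := hσx c hc
  refine ⟨C' + C, ?_⟩
  rintro _ ⟨j, rfl⟩
  have := hC (j + 1)
  push_cast at this
  simp only [loynesSeq]
  linarith [hC' j]

end Loynes

theorem stmt6_general {Ω : Type*} [MeasurableSpace Ω] (P : Measure Ω) [IsProbabilityMeasure P]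
    (θ θinv : Ω → Ω) (hθ : Ergodic θ P) (hθinv : Measurable θinv)
    (hli : Function.LeftInverse θinv θ)
    (σ ξ : Ω → ℝ) (hσint : Integrable σ P) (hξint : Integrable ξ P)
    (hξ0 : ∀ ω, 0 < ξ ω) :
    ∀ᵐ ω ∂P,
      Lfun θinv σ ξ (θ ω) = max (max (Lfun θinv σ ξ ω) (σ ω) - ξ ω) 0 := by
  have hξpos : 0 < ∫ ω, ξ ω ∂P := by
    rw [integral_pos_iff_support_of_nonneg (fun ω => (hξ0 ω).le) hξint,
      Function.support_eq_univ fun ω => (hξ0 ω).ne', measure_univ]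
    exact one_pos
  filter_upwards [(hθ.of_leftInverse hθinv hli).ae_bddAbove_range_loynesSeq hσint hξint hξpos]
    with ω hω
  exact Lfun_apply_eq_of_bddAbove (hli ω) (hξ0 ω).le hω

/-- `L` solves the equation `L ∘ θ = [max{L, σ} - ξ]⁺` almost surely. -/
theorem stmt6 {Ω : Type*} [MeasurableSpace Ω] (P : Measure Ω) [IsProbabilityMeasure P]
    (θ θinv : Ω → Ω) (hθ : Ergodic θ P) (hθinv : Measurable θinv)
    (hli : Function.LeftInverse θinv θ) (hri : Function.RightInverse θinv θ)
    (σ ξ : Ω → ℝ) (hσint : Integrable σ P) (hξint : Integrable ξ P)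
    (hσ0 : ∀ ω, 0 ≤ σ ω) (hξ0 : ∀ ω, 0 < ξ ω) :
    ∀ᵐ ω ∂P,
      Lfun θinv σ ξ (θ ω) = max (max (Lfun θinv σ ξ ω) (σ ω) - ξ ω) 0 :=
  stmt6_general P θ θinv hθ hθinv hli σ ξ hσint hξint hξ0
end

section
/- With the setup of the previous statement ($\theta$ ergodic measure-preserving, $\sigma \ge 0$ and $\xi > 0$ integrable with $\mathbb{E}[\xi] > 0$), the random variable $L = \left[\sup_{j\ge 1}(\sigma_{-j} - \sum_{i=1}^j \xi_{-i})\right]^+$ is almost surely finite. -/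
open MeasureTheory Filter Topology

/-!
Write `T = θ⁻¹` and `c = 𝔼[ξ] / 2`. Since `σ` is integrable, Borel–Cantelli gives
`σ (T^[j] ω) ≤ c j` for all large `j`, almost surely. On the other hand, `c - ξ` has negative
mean, and Garsia's maximal ergodic lemma shows that the Birkhoff sums of an integrable function
with negative mean along an ergodic map are almost surely bounded above; hence
`∑_{i ≤ j} ξ (T^[i] ω) ≥ c (j + 1) - K(ω)`. The two linear rates cancel, leaving the bound
`K(ω)`.
-/

section BirkhoffMax

variable {Ω : Type*} {T : Ω → Ω} {f : Ω → ℝ}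

/-- `birkhoffMax T f N x = max_{0 ≤ n ≤ N} birkhoffSum T f n x`; the recursion
`M (N + 1) = max 0 (f + M N ∘ T)` is what the maximal ergodic lemma exploits. -/
noncomputable def birkhoffMax (T : Ω → Ω) (f : Ω → ℝ) : ℕ → Ω → ℝ
  | 0 => 0
  | N + 1 => fun x => max 0 (f x + birkhoffMax T f N (T x))

lemma birkhoffMax_nonneg : ∀ (N : ℕ) (x : Ω), 0 ≤ birkhoffMax T f N x
  | 0, _ => le_rfl
  | _ + 1, _ => le_max_left _ _

lemma birkhoffMax_le_succ :
    ∀ (N : ℕ) (x : Ω), birkhoffMax T f N x ≤ birkhoffMax T f (N + 1) x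
  | 0, x => birkhoffMax_nonneg 1 x
  | N + 1, x => max_le_max le_rfl (add_le_add le_rfl (birkhoffMax_le_succ N (T x)))

lemma birkhoffSum_le_birkhoffMax :
    ∀ (n : ℕ) (x : Ω), birkhoffSum T f n x ≤ birkhoffMax T f n x
  | 0, _ => le_of_eq (birkhoffSum_zero _ _ _)
  | n + 1, x => by
    rw [birkhoffSum_succ']
    exact le_max_of_le_right (add_le_add le_rfl (birkhoffSum_le_birkhoffMax n (T x)))

lemma birkhoffMax_sub_comp_le_indicator (N : ℕ) (x : Ω) :
    birkhoffMax T f N x - birkhoffMax T f N (T x) ≤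
      {y | 0 < birkhoffMax T f N y}.indicator f x := by
  by_cases hx : 0 < birkhoffMax T f N x
  · rw [Set.indicator_of_mem (s := {y | 0 < birkhoffMax T f N y}) hx]
    cases N with
    | zero => exact absurd hx (lt_irrefl 0)
    | succ N =>
      have hmax : birkhoffMax T f (N + 1) x = f x + birkhoffMax T f N (T x) :=
        max_eq_right (le_of_lt (lt_max_iff.1 hx |>.resolve_left (lt_irrefl 0)))
      linarith [birkhoffMax_le_succ (T := T) (f := f) N (T x)]
  · rw [Set.indicator_of_notMem (s := {y | 0 < birkhoffMax T f N y}) hx]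
    linarith [birkhoffMax_nonneg (T := T) (f := f) N (T x), not_lt.1 hx]

lemma bddAbove_birkhoffSum_comp_iff (x : Ω) :
    BddAbove (Set.range fun n => birkhoffSum T f n (T x)) ↔
      BddAbove (Set.range fun n => birkhoffSum T f n x) := by
  constructor
  · rintro ⟨K, hK⟩
    refine ⟨max 0 (f x + K), Set.forall_mem_range.2 fun n => ?_⟩
    cases n with
    | zero => exact le_of_eq_of_le (birkhoffSum_zero _ _ _) (le_max_left _ _)
    | succ n =>
      rw [birkhoffSum_succ']
      exact le_max_of_le_right (add_le_add le_rfl (hK (Set.mem_range_self n)))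
  · rintro ⟨K, hK⟩
    refine ⟨K - f x, Set.forall_mem_range.2 fun n => ?_⟩
    have hn := hK (Set.mem_range_self (n + 1))
    rw [birkhoffSum_succ'] at hn
    linarith

end BirkhoffMax

namespace MeasureTheory

variable {Ω : Type*} [MeasurableSpace Ω] {μ : Measure Ω} {T : Ω → Ω} {f : Ω → ℝ}

lemma _root_.Measurable.birkhoffMax (hf : Measurable f) (hT : Measurable T) :
    ∀ N, Measurable (birkhoffMax T f N)
  | 0 => measurable_const
  | N + 1 => measurable_const.max (hf.add ((Measurable.birkhoffMax hf hT N).comp hT))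

lemma Integrable.birkhoffMax (hf : Integrable f μ) (hT : MeasurePreserving T μ μ) :
    ∀ N, Integrable (birkhoffMax T f N) μ
  | 0 => integrable_zero _ _ _
  | N + 1 => (integrable_zero _ _ _).sup
      (hf.add (hT.integrable_comp_of_integrable (Integrable.birkhoffMax hf hT N)))

theorem MeasurePreserving.setIntegral_birkhoffMax_pos_nonneg (hT : MeasurePreserving T μ μ)
    (hf : Measurable f) (hfi : Integrable f μ) (N : ℕ) :
    0 ≤ ∫ x in {x | 0 < birkhoffMax T f N x}, f x ∂μ := by
  set M := birkhoffMax T f N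
  have hMm : Measurable M := hf.birkhoffMax hT.measurable N
  have hM : Integrable M μ := hfi.birkhoffMax hT N
  have hMTi : Integrable (fun x => M (T x)) μ := hT.integrable_comp_of_integrable hM
  have hs : MeasurableSet {x | 0 < M x} := measurableSet_lt measurable_const hMm
  have hMT : ∫ x, M (T x) ∂μ = ∫ x, M x ∂μ := by
    conv_rhs => rw [← hT.map_eq]
    exact (integral_map hT.aemeasurable hMm.aestronglyMeasurable).symm
  rw [← integral_indicator hs]
  calc (0 : ℝ) = ∫ x, (M x - M (T x)) ∂μ := by
        rw [integral_sub hM hMTi, hMT, sub_self]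
    _ ≤ _ := integral_mono (hM.sub hMTi) (hfi.indicator hs)
        (birkhoffMax_sub_comp_le_indicator N)

theorem MeasurePreserving.integral_nonneg_of_ae_not_bddAbove_birkhoffSum
    (hT : MeasurePreserving T μ μ) (hf : Measurable f) (hfi : Integrable f μ)
    (h : ∀ᵐ x ∂μ, ¬ BddAbove (Set.range fun n => birkhoffSum T f n x)) :
    0 ≤ ∫ x, f x ∂μ := by
  set s : ℕ → Set Ω := fun N => {x | 0 < birkhoffMax T f N x}
  have hs : ∀ N, MeasurableSet (s N) := fun N =>
    measurableSet_lt measurable_const (hf.birkhoffMax hT.measurable N)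
  have hmono : Monotone s :=
    monotone_nat_of_le_succ fun N x hx => hx.trans_le (birkhoffMax_le_succ N x)
  have hfull : ⋃ N, s N =ᵐ[μ] Set.univ := by
    refine ae_eq_univ.2 (measure_mono_null (fun x hx => ?_) (ae_iff.1 h))
    simp only [Set.mem_compl_iff, Set.mem_iUnion, not_exists, Set.mem_ofPred_eq, not_lt, s] at hx
    exact not_not.2 ⟨0, Set.forall_mem_range.2 fun n =>
      (birkhoffSum_le_birkhoffMax n x).trans (hx n)⟩
  have hlim := tendsto_setIntegral_of_monotone hs hmono hfi.integrableOn
  rw [setIntegral_congr_set hfull, setIntegral_univ] at hlim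
  exact ge_of_tendsto' hlim (hT.setIntegral_birkhoffMax_pos_nonneg hf hfi)

theorem _root_.Ergodic.ae_bddAbove_birkhoffSum_of_measurable (hT : Ergodic T μ) (hf : Measurable f)
    (hfi : Integrable f μ) (hneg : ∫ x, f x ∂μ < 0) :
    ∀ᵐ x ∂μ, BddAbove (Set.range fun n => birkhoffSum T f n x) := by
  set E := {x | BddAbove (Set.range fun n => birkhoffSum T f n x)}
  have hE : MeasurableSet E := measurableSet_bddAbove_range fun n =>
    Finset.measurable_sum _ fun i _ => hf.comp (hT.measurable.iterate i)
  have hTE : T ⁻¹' E = E := Set.ext bddAbove_birkhoffSum_comp_iff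
  rcases hT.ae_empty_or_univ hE hTE with h | h
  · exact absurd (hT.toMeasurePreserving.integral_nonneg_of_ae_not_bddAbove_birkhoffSum hf hfi
      (measure_eq_zero_iff_ae_notMem.1 (ae_eq_empty.1 h))) hneg.not_ge
  · exact ae_eq_univ.1 h

theorem _root_.Ergodic.ae_bddAbove_birkhoffSum (hT : Ergodic T μ) (hf : Integrable f μ)
    (hneg : ∫ x, f x ∂μ < 0) :
    ∀ᵐ x ∂μ, BddAbove (Set.range fun n => birkhoffSum T f n x) := by
  have hfg := hf.1.ae_eq_mk
  have hg := hT.ae_bddAbove_birkhoffSum_of_measurable hf.1.stronglyMeasurable_mk.measurable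
    (hf.congr hfg) (by rwa [← integral_congr_ae hfg])
  have hsum : ∀ᵐ x ∂μ, ∀ n, birkhoffSum T f n x = birkhoffSum T (hf.1.mk f) n x :=
    ae_all_iff.2 fun n => hT.quasiMeasurePreserving.birkhoffSum_ae_eq_of_ae_eq hfg n
  filter_upwards [hg, hsum] with x hx hxn
  simpa only [hxn] using hx

theorem _root_.Ergodic.ae_exists_mul_sub_le_birkhoffSum [IsProbabilityMeasure μ]
    (hT : Ergodic T μ) (hf : Integrable f μ) {c : ℝ} (hc : c < ∫ x, f x ∂μ) :
    ∀ᵐ x ∂μ, ∃ K, ∀ n : ℕ, c * n - K ≤ birkhoffSum T f n x := by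
  have hneg : ∫ x, (c - f x) ∂μ < 0 := by
    rw [integral_sub (integrable_const c) hf, integral_const, probReal_univ, one_smul]
    linarith
  filter_upwards [hT.ae_bddAbove_birkhoffSum ((integrable_const c).sub hf) hneg]
    with x ⟨K, hK⟩
  refine ⟨K, fun n => ?_⟩
  have hn := hK (Set.mem_range_self n)
  rw [birkhoffSum_sub, birkhoffSum_of_comp_eq (φ := fun _ => c) rfl] at hn
  simp only [Pi.smul_apply, nsmul_eq_mul] at hn
  linarith

theorem MeasurePreserving.ae_eventually_le_mul_s7 [IsProbabilityMeasure μ]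
    (hT : MeasurePreserving T μ μ) {g : Ω → ℝ} (hg : Integrable g μ) {c : ℝ}
    (hc : 0 < c) :
    ∀ᵐ x ∂μ, ∀ᶠ n : ℕ in atTop, g (T^[n] x) ≤ c * n := by
  set X : Ω → ℝ := fun x => |g x| / c
  have hX : Integrable X μ := hg.abs.div_const c
  set A : ℕ → Set Ω := fun n => {x | X x ∈ Set.Ioi (n : ℝ)}
  -- the library lemma is stated for `volume`; the instance `⟨μ⟩` makes `volume = μ`
  have hsum : ∑' n, μ (A n) < ⊤ :=
    @ProbabilityTheory.tsum_prob_mem_Ioi_lt_top Ω ⟨μ⟩ _ X hX fun x => by positivity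
  have hpre : ∀ n, μ (T^[n] ⁻¹' A n) = μ (A n) := fun n =>
    (hT.iterate n).measure_preimage (nullMeasurableSet_lt aemeasurable_const hX.1.aemeasurable)
  filter_upwards [ae_eventually_notMem (s := fun n => T^[n] ⁻¹' A n)
    (by simpa only [hpre] using hsum.ne)] with x hx
  filter_upwards [hx] with n hn
  have hn : |g (T^[n] x)| / c ≤ n := not_lt.1 hn
  rw [div_le_iff₀ hc] at hn
  linarith [le_abs_self (g (T^[n] x))]

end MeasureTheory

theorem stmt7_general {Ω : Type*} [MeasurableSpace Ω] (P : Measure Ω) [IsProbabilityMeasure P]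
    (θ θinv : Ω → Ω) (hθ : Ergodic θ P) (hθinv : Measurable θinv)
    (hli : Function.LeftInverse θinv θ) (hri : Function.RightInverse θinv θ)
    (σ ξ : Ω → ℝ) (hσint : Integrable σ P) (hξint : Integrable ξ P)
    (hmean : 0 < ∫ ω, ξ ω ∂P) :
    ∀ᵐ ω ∂P, BddAbove (Set.range fun j : ℕ =>
      σ (θinv^[j + 1] ω) - ∑ i ∈ Finset.range (j + 1), ξ (θinv^[i + 1] ω)) := by
  set c := (∫ ω, ξ ω ∂P) / 2
  have hc : 0 < c := half_pos hmean
  have hcξ : c < ∫ ω, ξ ω ∂P := half_lt_self hmean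
  let e : Ω ≃ᵐ Ω := ⟨⟨θ, θinv, hli, hri⟩, hθ.measurable, hθinv⟩
  have hT : Ergodic θinv P := Ergodic.symm (e := e) hθ
  have hσ := hT.toMeasurePreserving.ae_eventually_le_mul_s7 hσint hc
  have hξ := hT.ae_exists_mul_sub_le_birkhoffSum hξint hcξ
  filter_upwards [hT.quasiMeasurePreserving.ae (hσ.and hξ)] with ω ⟨hσω, K, hK⟩
  have hshift : ∀ j : ℕ,
      σ (θinv^[j + 1] ω) - ∑ i ∈ Finset.range (j + 1), ξ (θinv^[i + 1] ω) =
      σ (θinv^[j] (θinv ω)) - birkhoffSum θinv ξ (j + 1) (θinv ω) := fun j => by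
    simp only [birkhoffSum, Function.iterate_succ_apply]
  simp_rw [hshift]
  refine (isBoundedUnder_of_eventually_le (a := K) ?_).bddAbove_range
  filter_upwards [hσω] with j hj
  have hKj := hK (j + 1)
  push_cast at hKj
  linarith

/-- The supremum defining `L` is almost surely finite, i.e. the family
`(σ_{-j} - ∑_{i=1}^{j} ξ_{-i})_{j ≥ 1}` is a.s. bounded above. -/
theorem stmt7 {Ω : Type*} [MeasurableSpace Ω] (P : Measure Ω) [IsProbabilityMeasure P]
    (θ θinv : Ω → Ω) (hθ : Ergodic θ P) (hθinv : Measurable θinv)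
    (hli : Function.LeftInverse θinv θ) (hri : Function.RightInverse θinv θ)
    (σ ξ : Ω → ℝ) (hσint : Integrable σ P) (hξint : Integrable ξ P)
    (hσ0 : ∀ ω, 0 ≤ σ ω) (hξ0 : ∀ ω, 0 < ξ ω)
    (hmean : 0 < ∫ ω, ξ ω ∂P) :
    ∀ᵐ ω ∂P, BddAbove (Set.range fun j : ℕ =>
      σ (θinv^[j + 1] ω) - ∑ i ∈ Finset.range (j + 1), ξ (θinv^[i + 1] ω)) :=
  stmt7_general P θ θinv hθ hθinv hli hri σ ξ hσint hξint hmean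
end

section
/- Let $\theta$ be an ergodic measure-preserving invertible transformation on $(\Omega,\mathcal{F},\mathbb{P})$, and $\sigma \ge 0$, $\xi > 0$ integrable. Then any almost surely finite solution $\tilde{L} \ge 0$ of the equation $\tilde{L}\circ\theta = [\max\{\tilde{L},\sigma\} - \xi]^+$ equals $L = [\sup_{j\ge 1}(\sigma_{-j} - \sum_{i=1}^j \xi_{-i})]^+$ almost surely. In particular the equation has a unique a.s. finite solution. -/
/-!
Unrolling the recursion backwards along the orbit shows that every nonnegative solution `L̃`
dominates each Loynes term, so `L ≤ L̃`; moreover `L` is itself a solution. The Lindley map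
`a ↦ [max{a, σ} - ξ]⁺` is monotone and 1-Lipschitz, so `D = L̃ - L ≥ 0` satisfies `D ∘ θ ≤ D`.
A measure-preserving map cannot decrease a function strictly on a set of positive measure
(compare the integrals of `arctan ∘ D` and `arctan ∘ D ∘ θ`), so `D` is invariant, hence a.e.
equal to a constant `c` by ergodicity. If `c > 0`, comparing the recursions for `L` and `L + c`
shows that neither `0` nor `σ` is ever the active branch, i.e. `L ∘ θ = L - ξ`, which is
impossible for the same reason since `ξ > 0`.
-/

open MeasureTheory Filter Topology

section Lindley

variable {a b c s x : ℝ}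

theorem lindley_sub_le_sub (hab : a ≤ b) :
    max (max b s - x) 0 - max (max a s - x) 0 ≤ b - a := by
  simp only [max_def]
  split_ifs <;> linarith

theorem lindley_eq_sub_of_add_const (hc : 0 < c)
    (h : max (max (a + c) s - x) 0 = max (max a s - x) 0 + c) :
    max (max a s - x) 0 = a - x := by
  simp only [max_def] at *
  split_ifs at * <;> linarith

end Lindley

theorem ciSup_nat_eq_max {α : Type*} [ConditionallyCompleteLinearOrder α] {u : ℕ → α}
    (hu : BddAbove (Set.range fun n => u (n + 1))) :
    ⨆ n, u n = max (u 0) (⨆ n, u (n + 1)) := by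
  obtain ⟨b, hb⟩ := hu
  have hu' : BddAbove (Set.range u) := by
    refine ⟨max (u 0) b, ?_⟩
    rintro _ ⟨_ | n, rfl⟩
    · exact le_max_left _ _
    · exact le_max_of_le_right (hb ⟨n, rfl⟩)
  refine le_antisymm (ciSup_le fun n => ?_) (max_le (le_ciSup hu' 0) ?_)
  · cases n with
    | zero => exact le_max_left _ _
    | succ n => exact le_max_of_le_right (le_ciSup ⟨b, hb⟩ n)
  · exact ciSup_le fun n => le_ciSup hu' (n + 1)

section LoynesSequence

def loynesTerm (s t : ℕ → ℝ) (j : ℕ) : ℝ :=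
  s j - ∑ i ∈ Finset.range (j + 1), t i

noncomputable def loynesSup (s t : ℕ → ℝ) : ℝ :=
  ⨆ j, loynesTerm s t j

variable {s t : ℕ → ℝ}

theorem loynesTerm_succ (j : ℕ) :
    loynesTerm s t (j + 1) = loynesTerm (fun n => s (n + 1)) (fun n => t (n + 1)) j - t 0 := by
  simp only [loynesTerm, Finset.sum_range_succ' _ (j + 1)]
  ring

theorem loynesSup_eq_max_sub
    (h : BddAbove (Set.range (loynesTerm (fun n => s (n + 1)) (fun n => t (n + 1))))) :
    loynesSup s t = max (s 0) (loynesSup (fun n => s (n + 1)) (fun n => t (n + 1))) - t 0 := by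
  obtain ⟨b, hb⟩ := h
  have hbdd : BddAbove (Set.range fun j => loynesTerm s t (j + 1)) := by
    refine ⟨b - t 0, ?_⟩
    rintro _ ⟨j, rfl⟩
    exact (loynesTerm_succ j).trans_le (sub_le_sub_right (hb ⟨j, rfl⟩) _)
  have h0 : loynesTerm s t 0 = s 0 - t 0 := by simp [loynesTerm]
  rw [loynesSup, loynesSup, ciSup_nat_eq_max hbdd]
  simp only [loynesTerm_succ]
  rw [← ciSup_sub ⟨b, hb⟩, h0, max_sub_sub_right]

theorem loynesTerm_le_of_lindley {y : ℕ → ℝ} (h : ∀ n, max (y (n + 1)) (s n) - t n ≤ y n)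
    (j : ℕ) : loynesTerm s t j ≤ y 0 := by
  have hy : ∀ k, y k - ∑ i ∈ Finset.range k, t i ≤ y 0 := by
    intro k
    induction k with
    | zero => simp
    | succ k ih =>
      have := (le_max_left (y (k + 1)) (s k)).trans (sub_le_iff_le_add.1 (h k))
      rw [Finset.sum_range_succ]
      linarith
  have := (le_max_right (y (j + 1)) (s j)).trans (sub_le_iff_le_add.1 (h j))
  rw [loynesTerm, Finset.sum_range_succ]
  linarith [hy j]

end LoynesSequence

section OrbitRecursion

variable {Ω : Type*} {θ θinv : Ω → Ω} {σ ξ : Ω → ℝ}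

theorem Lfun_eq_max_loynesSup (ω : Ω) :
    Lfun θinv σ ξ ω =
      max (loynesSup (fun n => σ (θinv^[n + 1] ω)) (fun n => ξ (θinv^[n + 1] ω))) 0 :=
  rfl

theorem bddAbove_and_Lfun_le_of_lindley {L : Ω → ℝ} {ω : Ω}
    (h : ∀ n, L (θinv^[n] ω) =
      max (max (L (θinv^[n + 1] ω)) (σ (θinv^[n + 1] ω)) - ξ (θinv^[n + 1] ω)) 0)
    (h0 : 0 ≤ L ω) :
    BddAbove (Set.range (loynesTerm (fun n => σ (θinv^[n + 1] ω)) (fun n => ξ (θinv^[n + 1] ω))))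
      ∧ Lfun θinv σ ξ ω ≤ L ω := by
  have hterm := loynesTerm_le_of_lindley (y := fun n => L (θinv^[n] ω))
    fun n => (le_max_left _ 0).trans (h n).ge
  exact ⟨⟨L ω, Set.forall_mem_range.2 hterm⟩, max_le (ciSup_le hterm) h0⟩

theorem Lfun_comp_of_bddAbove (hli : Function.LeftInverse θinv θ) {ω : Ω} (hσ : 0 ≤ σ ω)
    (hbdd : BddAbove (Set.range
      (loynesTerm (fun n => σ (θinv^[n + 1] ω)) (fun n => ξ (θinv^[n + 1] ω))))) :
    Lfun θinv σ ξ (θ ω) = max (max (Lfun θinv σ ξ ω) (σ ω) - ξ ω) 0 := by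
  have hshift : ∀ n, θinv^[n + 1] (θ ω) = θinv^[n] ω := fun n => by
    rw [Function.iterate_succ_apply, hli ω]
  rw [Lfun_eq_max_loynesSup, Lfun_eq_max_loynesSup]
  simp only [hshift]
  rw [loynesSup_eq_max_sub hbdd]
  simp only [Function.iterate_zero_apply]
  rw [max_assoc, max_eq_right hσ, max_comm (σ ω)]

end OrbitRecursion

namespace MeasureTheory.MeasurePreserving

variable {α β : Type*} [MeasurableSpace α] [MeasurableSpace β] {μ : Measure α} {ν : Measure β}

theorem of_leftInverse {f : α → β} {g : β → α} (hf : MeasurePreserving f μ ν)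
    (hg : Measurable g) (hgf : Function.LeftInverse g f) : MeasurePreserving g ν μ :=
  ⟨hg, by rw [← hf.map_eq, Measure.map_map hg hf.measurable, hgf.comp_eq_id, Measure.map_id]⟩

variable [IsFiniteMeasure μ] {f : α → α} {h : α → ℝ}

theorem ae_comp_eq_of_ae_comp_le (hf : MeasurePreserving f μ μ) (hm : AEMeasurable h μ)
    (hle : ∀ᵐ x ∂μ, h (f x) ≤ h x) : h ∘ f =ᵐ[μ] h := by
  -- `arctan ∘ h` is bounded, hence integrable, and has the same order and level sets as `h`.
  set g : α → ℝ := Real.arctan ∘ h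
  have hgm : AEMeasurable g μ := Real.continuous_arctan.measurable.comp_aemeasurable hm
  have hgf : AEMeasurable (fun x => g (f x)) μ :=
    hgm.comp_quasiMeasurePreserving hf.quasiMeasurePreserving
  have hbound : ∀ y, ‖Real.arctan y‖ ≤ Real.pi / 2 := fun y => by
    rw [Real.norm_eq_abs, abs_le]
    exact ⟨(Real.neg_pi_div_two_lt_arctan y).le, (Real.arctan_lt_pi_div_two y).le⟩
  have hgi : Integrable g μ :=
    .of_bound hgm.aestronglyMeasurable _ (.of_forall fun x => hbound (h x))
  have hgfi : Integrable (fun x => g (f x)) μ :=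
    .of_bound hgf.aestronglyMeasurable _ (.of_forall fun x => hbound (h (f x)))
  have hint : ∫ x, g (f x) ∂μ = ∫ x, g x ∂μ := by
    rw [← integral_map hf.aemeasurable (by rw [hf.map_eq]; exact hgm.aestronglyMeasurable),
      hf.map_eq]
  have hnn : 0 ≤ᵐ[μ] fun x => g x - g (f x) := by
    filter_upwards [hle] with x hx
    exact sub_nonneg.2 (Real.arctan_strictMono.monotone hx)
  have hzero : (fun x => g x - g (f x)) =ᵐ[μ] 0 := by
    refine (integral_eq_zero_iff_of_nonneg_ae hnn (hgi.sub hgfi)).1 ?_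
    rw [integral_sub hgi hgfi, hint, sub_self]
  filter_upwards [hzero] with x hx
  exact Real.arctan_injective (sub_eq_zero.1 hx).symm

theorem not_ae_comp_eq_sub [NeZero μ] (hf : MeasurePreserving f μ μ) (hm : AEMeasurable h μ)
    {ξ : α → ℝ} (hξ : ∀ᵐ x ∂μ, 0 < ξ x) : ¬ ∀ᵐ x ∂μ, h (f x) = h x - ξ x := by
  intro hsub
  have hle : ∀ᵐ x ∂μ, h (f x) ≤ h x := by
    filter_upwards [hsub, hξ] with x hx hξx
    linarith
  obtain ⟨x, hx, hξx, hfx⟩ := (hsub.and (hξ.and (hf.ae_comp_eq_of_ae_comp_le hm hle))).exists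
  simp only [Function.comp_apply] at hfx
  linarith

end MeasureTheory.MeasurePreserving

section LindleyEquation

variable {Ω : Type*} [MeasurableSpace Ω] {P : Measure Ω} {θ θinv : Ω → Ω} {σ ξ : Ω → ℝ}

theorem aemeasurable_Lfun (hθinv : MeasurePreserving θinv P P) (hσ : AEMeasurable σ P)
    (hξ : AEMeasurable ξ P) : AEMeasurable (Lfun θinv σ ξ) P := by
  have hcomp : ∀ {g : Ω → ℝ}, AEMeasurable g P → ∀ n, AEMeasurable (fun ω => g (θinv^[n] ω)) P :=
    fun hg n => hg.comp_quasiMeasurePreserving (hθinv.iterate n).quasiMeasurePreserving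
  refine (AEMeasurable.iSup fun j => ?_).max aemeasurable_const
  exact (hcomp hσ _).sub (Finset.aemeasurable_fun_sum _ fun i _ => hcomp hξ _)

theorem ae_bddAbove_and_Lfun_le (hθinv : MeasurePreserving θinv P P)
    (hri : Function.RightInverse θinv θ) {L : Ω → ℝ} (hL0 : ∀ ω, 0 ≤ L ω)
    (hL : ∀ᵐ ω ∂P, L (θ ω) = max (max (L ω) (σ ω) - ξ ω) 0) :
    ∀ᵐ ω ∂P, BddAbove (Set.range
        (loynesTerm (fun n => σ (θinv^[n + 1] ω)) (fun n => ξ (θinv^[n + 1] ω))))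
      ∧ Lfun θinv σ ξ ω ≤ L ω := by
  have horbit : ∀ᵐ ω ∂P, ∀ n, L (θ (θinv^[n + 1] ω)) =
      max (max (L (θinv^[n + 1] ω)) (σ (θinv^[n + 1] ω)) - ξ (θinv^[n + 1] ω)) 0 :=
    ae_all_iff.2 fun n => (hθinv.iterate (n + 1)).quasiMeasurePreserving.ae hL
  filter_upwards [horbit] with ω hω
  refine bddAbove_and_Lfun_le_of_lindley (fun n => ?_) (hL0 ω)
  rw [← hω n, Function.iterate_succ_apply', hri (θinv^[n] ω)]

theorem Ergodic.ae_eq_of_lindley_of_ae_le [IsFiniteMeasure P] [NeZero P] (hθ : Ergodic θ P)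
    (hξ : ∀ᵐ ω ∂P, 0 < ξ ω) {L₁ L₂ : Ω → ℝ} (h₁m : AEMeasurable L₁ P)
    (h₂m : AEMeasurable L₂ P) (h₁ : ∀ᵐ ω ∂P, L₁ (θ ω) = max (max (L₁ ω) (σ ω) - ξ ω) 0)
    (h₂ : ∀ᵐ ω ∂P, L₂ (θ ω) = max (max (L₂ ω) (σ ω) - ξ ω) 0) (hle : L₁ ≤ᵐ[P] L₂) :
    L₁ =ᵐ[P] L₂ := by
  have hDm : AEMeasurable (L₂ - L₁) P := h₂m.sub h₁m
  have hDθ : (L₂ - L₁) ∘ θ =ᵐ[P] L₂ - L₁ :=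
    hθ.toMeasurePreserving.ae_comp_eq_of_ae_comp_le hDm <| by
      filter_upwards [h₁, h₂, hle] with ω e₁ e₂ hω
      simpa only [Pi.sub_apply, e₁, e₂] using lindley_sub_le_sub hω
  obtain ⟨c, hc⟩ := hθ.ae_eq_const_of_ae_eq_comp₀ hDm.nullMeasurable hDθ
  have hc₀ : 0 ≤ c := by
    obtain ⟨ω, hω, hDω⟩ := (hle.and hc).exists
    have hcω : L₂ ω - L₁ ω = c := hDω
    linarith
  rcases hc₀.eq_or_lt with rfl | hpos
  · filter_upwards [hc] with ω hω
    exact (sub_eq_zero.1 hω).symm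
  refine absurd ?_ (hθ.toMeasurePreserving.not_ae_comp_eq_sub h₁m hξ)
  filter_upwards [h₁, h₂, hc, hθ.toMeasurePreserving.quasiMeasurePreserving.ae hc]
    with ω e₁ e₂ hω hθω
  have hL₂ : L₂ ω = L₁ ω + c := eq_add_of_sub_eq' hω
  have hL₂θ : L₂ (θ ω) = L₁ (θ ω) + c := eq_add_of_sub_eq' hθω
  rw [e₁]
  refine lindley_eq_sub_of_add_const hpos ?_
  rw [← e₁, ← hL₂, ← e₂, hL₂θ]

end LindleyEquation

/-- Any a.s. finite (real-valued) nonnegative solution of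
`L̃ ∘ θ = [max{L̃, σ} - ξ]⁺` equals `L` almost surely: the equation has a
unique a.s. finite solution. -/
theorem stmt8 {Ω : Type*} [MeasurableSpace Ω] (P : Measure Ω) [IsProbabilityMeasure P]
    (θ θinv : Ω → Ω) (hθ : Ergodic θ P) (hθinv : Measurable θinv)
    (hli : Function.LeftInverse θinv θ) (hri : Function.RightInverse θinv θ)
    (σ ξ : Ω → ℝ) (hσint : Integrable σ P) (hξint : Integrable ξ P)
    (hσ0 : ∀ ω, 0 ≤ σ ω) (hξ0 : ∀ ω, 0 < ξ ω)
    (Ltilde : Ω → ℝ) (hLmeas : Measurable Ltilde) (hLpos : ∀ ω, 0 ≤ Ltilde ω)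
    (hLeq : ∀ᵐ ω ∂P, Ltilde (θ ω) = max (max (Ltilde ω) (σ ω) - ξ ω) 0) :
    ∀ᵐ ω ∂P, Ltilde ω = Lfun θinv σ ξ ω := by
  have hθinvmp : MeasurePreserving θinv P P := hθ.toMeasurePreserving.of_leftInverse hθinv hli
  have hmin := ae_bddAbove_and_Lfun_le hθinvmp hri hLpos hLeq
  have hLrec : ∀ᵐ ω ∂P, Lfun θinv σ ξ (θ ω) = max (max (Lfun θinv σ ξ ω) (σ ω) - ξ ω) 0 := by
    filter_upwards [hmin] with ω hω
    exact Lfun_comp_of_bddAbove hli (hσ0 ω) hω.1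
  refine (hθ.ae_eq_of_lindley_of_ae_le (.of_forall hξ0)
    (aemeasurable_Lfun hθinvmp hσint.aemeasurable hξint.aemeasurable) hLmeas.aemeasurable
    hLrec hLeq ?_).symm
  filter_upwards [hmin] with ω hω
  exact hω.2
end

section
/- Fix a non-increasing rate function $r:\mathbb{N}^*\to(0,1]$ and $x \ge 0$. For a finite counting measure $\mu$ with atoms $\alpha_1(\mu)\le\cdots\le\alpha_{N(\mu)}(\mu)$, define for $1\le i\le N(\mu)$: $\gamma_i^r(\mu,x) = r(N(\mu)-i+1)\big(x - \sum_{j=1}^{i-1}\alpha_j(\mu)\big(\tfrac{1}{r(N(\mu)-j+1)} - \tfrac{1}{r(N(\mu)-j)}\big)\big)$ and $i^r(\mu,x) = \max\{i \le N(\mu) : \alpha_i(\mu) \le \gamma_i^r(\mu,x)\}$ (with $\max\emptyset = 0$). Then for all $1 \le i < N(\mu)$: $\gamma_{i+1}^r(\mu,x) - \gamma_i^r(\mu,x) = \frac{r(N(\mu)-i) - r(N(\mu)-i+1)}{r(N(\mu)-i+1)}\big(\gamma_i^r(\mu,x) - \alpha_i(\mu)\big)$, and consequently $\gamma_{i^r(\mu,x)+1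 \wedge 1}^r(\mu,x) = \max_{1\le i\le N(\mu)} \gamma_i^r(\mu,x)$ whenever $N(\mu)\ge 1$ (writing $\gamma^r(\mu,x) := \gamma^r_{(i^r(\mu,x)+1)\wedge 1}(\mu,x)$). -/
/-! Telescoping gives the increment identity; its coefficient is nonnegative because `r` is
non-increasing, so `γ` steps up at `i` exactly when `α_i ≤ γ_i`. This condition is inherited
downwards: once `γ_i < α_i`, `γ` stops increasing while `α` does not decrease. Hence it holds
exactly for `i ≤ i^r(μ,x)`, and `γ` is unimodal with its peak at `(i^r(μ,x) + 1) ∧ N`. -/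

open MeasureTheory Filter Topology

/-- `γ_i^r(μ,x)` for a profile with `N` atoms `α 1 ≤ … ≤ α N` (1-based indexing):
`γ_i = r(N-i+1) (x - ∑_{j=1}^{i-1} α_j (1/r(N-j+1) - 1/r(N-j)))`. -/
noncomputable def gam (r : ℕ → ℝ) (N : ℕ) (α : ℕ → ℝ) (x : ℝ) (i : ℕ) : ℝ :=
  r (N - i + 1) *
    (x - ∑ j ∈ Finset.Icc 1 (i - 1), α j * (1 / r (N - j + 1) - 1 / r (N - j)))

open Classical in
/-- `i^r(μ,x) = max {i ≤ N : α_i ≤ γ_i^r(μ,x)}`, with `max ∅ = 0`. -/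
noncomputable def irdx (r : ℕ → ℝ) (N : ℕ) (α : ℕ → ℝ) (x : ℝ) : ℕ :=
  WithBot.unbotD 0 ((Finset.Icc 1 N).filter (fun i => α i ≤ gam r N α x i)).max

lemma Finset.le_max_unbotD_iff_mem {s : Finset ℕ}
    (hs : ∀ i j, 0 < i → i ≤ j → j ∈ s → i ∈ s) {i : ℕ} (hi : 0 < i) :
    i ≤ s.max.unbotD 0 ↔ i ∈ s := by
  refine ⟨fun hle => ?_, fun hmem => WithBot.le_unbotD (Finset.le_max hmem)⟩
  rcases s.eq_empty_or_nonempty with rfl | hne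
  · simp only [Finset.max_empty, WithBot.unbotD_bot] at hle
    omega
  · obtain ⟨m, hm⟩ := Finset.max_of_nonempty hne
    rw [hm, WithBot.unbotD_coe] at hle
    exact hs i m hi hle (Finset.mem_of_max hm)

lemma isGreatest_image_Icc_of_monotoneOn_of_antitoneOn {α β : Type*} [LinearOrder α]
    [Preorder β] {f : α → β} {a k b : α} (hak : a ≤ k) (hkb : k ≤ b)
    (hmono : MonotoneOn f (Set.Icc a k)) (hanti : AntitoneOn f (Set.Icc k b)) :
    IsGreatest (f '' Set.Icc a b) (f k) := by
  refine ⟨Set.mem_image_of_mem f ⟨hak, hkb⟩, ?_⟩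
  rintro _ ⟨i, ⟨hai, hib⟩, rfl⟩
  rcases le_total i k with hik | hki
  · exact hmono ⟨hai, hik⟩ ⟨hak, le_rfl⟩ hik
  · exact hanti ⟨le_rfl, hkb⟩ ⟨hki, hib⟩ hki

section Gam

variable {r : ℕ → ℝ} {N : ℕ} {α : ℕ → ℝ} {x : ℝ}

lemma gam_succ_sub_gam (hr : ∀ n, 1 ≤ n → 0 < r n) {i : ℕ} (hi : 1 ≤ i) (hiN : i < N) :
    gam r N α x (i + 1) - gam r N α x i =
      (r (N - i) - r (N - i + 1)) / r (N - i + 1) * (gam r N α x i - α i) := by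
  obtain ⟨m, rfl⟩ : ∃ m, i = m + 1 := ⟨i - 1, by omega⟩
  have hr₁ : r (N - (m + 1)) ≠ 0 := (hr _ (by omega)).ne'
  have hr₂ : r (N - (m + 1) + 1) ≠ 0 := (hr _ (by omega)).ne'
  have hidx : N - (m + 1 + 1) + 1 = N - (m + 1) := by omega
  simp only [gam, Nat.add_sub_cancel, hidx]
  rw [Finset.sum_Icc_succ_top (by omega : 1 ≤ m + 1)]
  field_simp
  ring

lemma gam_succ_sub_gam_coeff_nonneg (hr : ∀ n, 1 ≤ n → 0 < r n)
    (hrmono : AntitoneOn r (Set.Ici 1)) {i : ℕ} (hiN : i < N) :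
    0 ≤ (r (N - i) - r (N - i + 1)) / r (N - i + 1) := by
  have hle : r (N - i + 1) ≤ r (N - i) :=
    hrmono (Set.mem_Ici.2 (by omega)) (Set.mem_Ici.2 (by omega)) (by omega)
  exact div_nonneg (by linarith) (hr _ (by omega)).le

lemma gam_le_gam_succ (hr : ∀ n, 1 ≤ n → 0 < r n) (hrmono : AntitoneOn r (Set.Ici 1))
    {i : ℕ} (hi : 1 ≤ i) (hiN : i < N) (h : α i ≤ gam r N α x i) :
    gam r N α x i ≤ gam r N α x (i + 1) := by
  have := gam_succ_sub_gam (α := α) (x := x) hr hi hiN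
  nlinarith [gam_succ_sub_gam_coeff_nonneg hr hrmono hiN]

lemma gam_succ_le_gam (hr : ∀ n, 1 ≤ n → 0 < r n) (hrmono : AntitoneOn r (Set.Ici 1))
    {i : ℕ} (hi : 1 ≤ i) (hiN : i < N) (h : gam r N α x i ≤ α i) :
    gam r N α x (i + 1) ≤ gam r N α x i := by
  have := gam_succ_sub_gam (α := α) (x := x) hr hi hiN
  nlinarith [gam_succ_sub_gam_coeff_nonneg hr hrmono hiN]

lemma gam_lt_of_gam_lt (hr : ∀ n, 1 ≤ n → 0 < r n) (hrmono : AntitoneOn r (Set.Ici 1))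
    (hα : MonotoneOn α (Set.Icc 1 N)) {i j : ℕ} (hi : 1 ≤ i)
    (hij : i ≤ j) (hjN : j ≤ N) (h : gam r N α x i < α i) :
    gam r N α x j < α j := by
  induction j, hij using Nat.le_induction with
  | base => exact h
  | succ n hin ih =>
    have hn := ih (by omega)
    calc gam r N α x (n + 1) ≤ gam r N α x n :=
          gam_succ_le_gam hr hrmono (by omega) (by omega) hn.le
      _ < α n := hn
      _ ≤ α (n + 1) := hα ⟨by omega, by omega⟩ ⟨by omega, hjN⟩ (by omega)

lemma le_gam_iff_le_irdx (hr : ∀ n, 1 ≤ n → 0 < r n) (hrmono : AntitoneOn r (Set.Ici 1))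
    (hα : MonotoneOn α (Set.Icc 1 N)) {i : ℕ} (hi : 1 ≤ i)
    (hiN : i ≤ N) : α i ≤ gam r N α x i ↔ i ≤ irdx r N α x := by
  classical
  rw [irdx, Finset.le_max_unbotD_iff_mem _ hi]
  · simp [hi, hiN]
  · simp only [Finset.mem_filter, Finset.mem_Icc]
    rintro k l hk hkl ⟨⟨-, hlN⟩, hl⟩
    refine ⟨⟨hk, hkl.trans hlN⟩, not_lt.1 fun hlt => ?_⟩
    exact (gam_lt_of_gam_lt hr hrmono hα hk hkl hlN hlt).not_ge hl

end Gam

theorem stmt12_general (r : ℕ → ℝ) (hr : ∀ n, 1 ≤ n → 0 < r n ∧ r n ≤ 1)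
    (hrmono : ∀ m n, 1 ≤ m → m ≤ n → r n ≤ r m)
    (N : ℕ) (α : ℕ → ℝ)
    (hαmono : ∀ i j, 1 ≤ i → i ≤ j → j ≤ N → α i ≤ α j)
    (x : ℝ) :
    (∀ i, 1 ≤ i → i < N →
      gam r N α x (i + 1) - gam r N α x i =
        (r (N - i) - r (N - i + 1)) / r (N - i + 1) * (gam r N α x i - α i)) ∧
    (1 ≤ N →
      IsGreatest {y : ℝ | ∃ i, 1 ≤ i ∧ i ≤ N ∧ y = gam r N α x i}
        (gam r N α x (min (irdx r N α x + 1) N))) := by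
  have hpos : ∀ n, 1 ≤ n → 0 < r n := fun n hn => (hr n hn).1
  have hanti : AntitoneOn r (Set.Ici 1) := fun m hm n _ hmn => hrmono m n hm hmn
  have hα : MonotoneOn α (Set.Icc 1 N) := fun i hi j hj hij => hαmono i j hi.1 hij hj.2
  refine ⟨fun i hi hiN => gam_succ_sub_gam hpos hi hiN, fun hN => ?_⟩
  have hset : {y : ℝ | ∃ i, 1 ≤ i ∧ i ≤ N ∧ y = gam r N α x i} =
      gam r N α x '' Set.Icc 1 N := by
    ext y
    simp only [Set.mem_ofPred_eq, Set.mem_image, Set.mem_Icc, and_assoc, eq_comm]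
  rw [hset]
  refine isGreatest_image_Icc_of_monotoneOn_of_antitoneOn (by omega) (min_le_right _ _) ?_ ?_
  · refine monotoneOn_of_le_add_one Set.ordConnected_Icc fun i _ ⟨hi₁, hi₂⟩ ⟨_, hi'⟩ => ?_
    exact gam_le_gam_succ hpos hanti hi₁ (by omega)
      ((le_gam_iff_le_irdx hpos hanti hα hi₁ (by omega)).2 (by omega))
  · refine antitoneOn_of_add_one_le Set.ordConnected_Icc fun i _ ⟨hi₁, hi₂⟩ ⟨_, hi'⟩ => ?_
    refine gam_succ_le_gam hpos hanti (by omega) (by omega) (not_le.1 fun hle => ?_).le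
    have := (le_gam_iff_le_irdx hpos hanti hα (by omega) (by omega)).1 hle
    omega

/-- The increment identity
`γ_{i+1} - γ_i = ((r(N-i) - r(N-i+1)) / r(N-i+1)) (γ_i - α_i)`, and the consequent fact
that `γ^r(μ,x) := γ_{(i^r(μ,x)+1) ∧ N}` is the maximum of `γ_1, …, γ_N`. -/
theorem stmt12 (r : ℕ → ℝ) (hr : ∀ n, 1 ≤ n → 0 < r n ∧ r n ≤ 1)
    (hrmono : ∀ m n, 1 ≤ m → m ≤ n → r n ≤ r m)
    (N : ℕ) (α : ℕ → ℝ)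
    (hα0 : ∀ i, 1 ≤ i → i ≤ N → 0 ≤ α i)
    (hαmono : ∀ i j, 1 ≤ i → i ≤ j → j ≤ N → α i ≤ α j)
    (x : ℝ) (hx : 0 ≤ x) :
    (∀ i, 1 ≤ i → i < N →
      gam r N α x (i + 1) - gam r N α x i =
        (r (N - i) - r (N - i + 1)) / r (N - i + 1) * (gam r N α x i - α i)) ∧
    (1 ≤ N →
      IsGreatest {y : ℝ | ∃ i, 1 ≤ i ∧ i ≤ N ∧ y = gam r N α x i}
        (gam r N α x (min (irdx r N α x + 1) N))) :=
  stmt12_general r hr hrmono N α hαmono x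
end
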